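/- arXiv:2009.01345 — 3 statements merged into one kernel-verified Lean document; each statement's English description precedes it below -/
import Mathlib

section
/- Let p : I^n → ℝ be symmetric coefficients with finite support, and M^{(j)} ∈ ℝ^{n×n} for j ∈ I a family of matrices. Then the quantity Σ_{i ∈ I^n} p(i) · det(M^{(i₁)}_1, …, M^{(iₙ)}_n) is invariant under simultaneous conjugation: replacing every M^{(j)} by S⁻¹ M^{(j)} S for an invertible matrix S does not change its value. -/
/-!
For fixed coefficients `p` and matrices `M⁽ʲ⁾`, the map sending vectors `x₁, …, xₙ` to
`Σᵢ p(i) det(M^{(i₁)} x₁, …, M^{(iₙ)} xₙ)` is multilinear, and the symmetry of `p` makes it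
alternating: swapping two equal arguments is undone by reindexing the sum by the transposition,
but the determinant changes sign. An alternating `n`-form on `Rⁿ` is a multiple of `det`, so
plugging in the columns of `B` multiplies the value at the standard basis by `det B`. Hence
replacing every `M⁽ʲ⁾` by `A M⁽ʲ⁾ B` multiplies the sum by `det A · det B`, which is `1` for
`A = S⁻¹`, `B = S`.
-/

open Finset Matrix

theorem Finsupp.sum_support_comp_perm {ι I R M : Type*} [Zero R] [AddCommMonoid M]
    (p : (ι → I) →₀ R) (hp : ∀ (σ : Equiv.Perm ι) (i : ι → I), p (i ∘ σ) = p i)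
    (σ : Equiv.Perm ι) (g : (ι → I) → M) :
    ∑ i ∈ p.support, g (i ∘ σ) = ∑ i ∈ p.support, g i :=
  Finset.sum_equiv (σ.symm.arrowCongr (Equiv.refl I))
    (fun i => by rw [Finsupp.mem_support_iff, Finsupp.mem_support_iff, ← hp σ i]; rfl)
    (fun _ _ => rfl)

namespace Matrix

variable {ι I R : Type*} [Fintype ι] [DecidableEq ι] [CommRing R]

def mixedDet (p : (ι → I) →₀ R) (M : I → Matrix ι ι R) : R :=
  ∑ i ∈ p.support, p i * (of fun r c => M (i c) r c).det

theorem mixedDet_mul_left (p : (ι → I) →₀ R) (M : I → Matrix ι ι R) (A : Matrix ι ι R) :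
    mixedDet p (fun j => A * M j) = A.det * mixedDet p M := by
  simp only [mixedDet, mul_sum]
  refine sum_congr rfl fun i _ => ?_
  rw [show (of fun r c => (A * M (i c)) r c) = A * of fun r c => M (i c) r c by
    ext r c; simp [mul_apply], det_mul]
  ring

def mixedDetMultilinear (p : (ι → I) →₀ R) (M : I → Matrix ι ι R) :
    MultilinearMap R (fun _ : ι => ι → R) R :=
  ∑ i ∈ p.support, p i •
    detRowAlternating.toMultilinearMap.compLinearMap fun c => (M (i c)).mulVecLin

theorem mixedDetMultilinear_apply (p : (ι → I) →₀ R) (M : I → Matrix ι ι R)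
    (v : ι → ι → R) :
    mixedDetMultilinear p M v = ∑ i ∈ p.support, p i * (of fun c => M (i c) *ᵥ v c).det := by
  simp only [mixedDetMultilinear, _root_.sum_apply, _root_.smul_apply,
    MultilinearMap.compLinearMap_apply, mulVecBilin_apply, AlternatingMap.coe_multilinearMap,
    smul_eq_mul]
  rfl

theorem mixedDetMultilinear_eq_neg_self_of_eq (p : (ι → I) →₀ R)
    (hp : ∀ (σ : Equiv.Perm ι) (i : ι → I), p (i ∘ σ) = p i) (M : I → Matrix ι ι R)
    (v : ι → ι → R) {a b : ι} (hv : v a = v b) (hab : a ≠ b) :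
    mixedDetMultilinear p M v = -mixedDetMultilinear p M v := by
  conv_lhs =>
    rw [mixedDetMultilinear_apply, ← Finsupp.sum_support_comp_perm p hp (Equiv.swap a b)]
  rw [mixedDetMultilinear_apply, ← sum_neg_distrib]
  refine sum_congr rfl fun i _ => ?_
  have hswap : (of fun c => M ((i ∘ Equiv.swap a b) c) *ᵥ v c)
      = (of fun c => M (i c) *ᵥ v c).submatrix (Equiv.swap a b) id := by
    ext c r
    simp [Equiv.apply_swap_eq_self hv]
  rw [hp, hswap, det_permute, Equiv.Perm.sign_swap hab]
  simp

variable [IsAddTorsionFree R]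

def mixedDetAlternating (p : (ι → I) →₀ R)
    (hp : ∀ (σ : Equiv.Perm ι) (i : ι → I), p (i ∘ σ) = p i) (M : I → Matrix ι ι R) :
    (ι → R) [⋀^ι]→ₗ[R] R where
  toMultilinearMap := mixedDetMultilinear p M
  map_eq_zero_of_eq' v _ _ hv hab :=
    self_eq_neg.mp (mixedDetMultilinear_eq_neg_self_of_eq p hp M v hv hab)

theorem mixedDet_mul_right (p : (ι → I) →₀ R)
    (hp : ∀ (σ : Equiv.Perm ι) (i : ι → I), p (i ∘ σ) = p i) (M : I → Matrix ι ι R)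
    (B : Matrix ι ι R) :
    mixedDet p (fun j => M j * B) = B.det * mixedDet p M := by
  have h_columns :
      mixedDetAlternating p hp M (fun c k => B k c) = mixedDet p (fun j => M j * B) := by
    rw [mixedDet, mixedDetAlternating, AlternatingMap.coe_mk, mixedDetMultilinear_apply]
    refine sum_congr rfl fun i _ => ?_
    rw [← det_transpose]
    rfl
  have h_basis : mixedDetAlternating p hp M (Pi.basisFun R ι) = mixedDet p M := by
    rw [mixedDet, mixedDetAlternating, AlternatingMap.coe_mk, mixedDetMultilinear_apply]
    refine sum_congr rfl fun i _ => ?_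
    rw [← det_transpose]
    congr 2
    ext r c
    simp
  rw [← h_columns, (mixedDetAlternating p hp M).eq_smul_basis_det (Pi.basisFun R ι), h_basis,
    AlternatingMap.smul_apply, Pi.basisFun_det_apply, smul_eq_mul, mul_comm]
  exact congrArg (· * mixedDet p M) (det_transpose B)

end Matrix

/-- For symmetric coefficients `p : Iⁿ → ℝ` with finite support and a family of
matrices `M⁽ʲ⁾`, the quantity `Σᵢ p(i) det(M^{(i₁)}_1, …, M^{(iₙ)}_n)` (where the
`c`-th column is the `c`-th column of `M^{(i_c)}`) is invariant under simultaneous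
conjugation `M⁽ʲ⁾ ↦ S⁻¹ M⁽ʲ⁾ S` by an invertible matrix `S`. -/
theorem det_sum_invariant_conjugation {n : ℕ} {I : Type*}
    (p : (Fin n → I) →₀ ℝ)
    (hp : ∀ (σ : Equiv.Perm (Fin n)) (i : Fin n → I), p (i ∘ σ) = p i)
    (M : I → Matrix (Fin n) (Fin n) ℝ)
    (S : Matrix (Fin n) (Fin n) ℝ) (hS : IsUnit S.det) :
    ∑ i ∈ p.support, p i * (Matrix.of fun r c => (S⁻¹ * M (i c) * S) r c).det
      = ∑ i ∈ p.support, p i * (Matrix.of fun r c => M (i c) r c).det := by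
  calc _ = mixedDet p (fun j => S⁻¹ * M j * S) := rfl
    _ = S.det * (S⁻¹.det * mixedDet p M) := by
      rw [mixedDet_mul_right p hp, mixedDet_mul_left]
    _ = mixedDet p M := by
      rw [← mul_assoc, mul_comm S.det, det_nonsing_inv_mul_det S hS, one_mul]
end

section
/- Let B be an n×n complex matrix with eigenvalues b₁,…,bₙ (with multiplicity), and let q(x₁,…,xₙ) = Σ_{i ∈ ℕ^n} p_i x₁^{i₁}⋯xₙ^{iₙ} be a symmetric polynomial. Then q(b₁,…,bₙ) = Σ_{i ∈ ℕ^n} p_i · det(B^{i₁}_1, …, B^{iₙ}_n), where B^k_j denotes the j-th column of the matrix power B^k. -/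
/-!
For symmetric `p`, the map `v ↦ ∑ᵢ pᵢ det(B^{i₁} v₁, …, B^{iₙ} vₙ)` is multilinear and alternating
in the columns `vⱼ`: if two columns agree, swapping them is undone by swapping the corresponding
exponents, which does not change `p`, so the value equals its own negative. Hence the map is
`λ · det(v₁, …, vₙ)`, and `λ` is the right-hand side of the theorem (take the standard basis).
Taking for `v` instead a basis in which `B` is triangular, each determinant becomes
`det(v) · ∏ⱼ Tⱼⱼ^{iⱼ}` with `T` the triangular form, whose diagonal is a reordering of `b`; so `λ` is
`q(b₁, …, bₙ)`.
-/

open Finset Module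

theorem exists_perm_comp_eq_of_map_univ_eq {ι α : Type*} [Fintype ι] {b d : ι → α}
    (h : univ.val.map b = univ.val.map d) : ∃ σ : Equiv.Perm ι, b ∘ σ = d := by
  classical
  have hfiber (a : α) : Fintype.card {x // d x = a} = Fintype.card {x // b x = a} := by
    have := congrArg (Multiset.count a) h
    simp only [Multiset.count_map] at this
    simp only [Fintype.card_subtype, Finset.card, Finset.filter_val, eq_comm (a := a)] at this ⊢
    exact this.symm
  exact ⟨Equiv.ofFiberEquiv fun a => Fintype.equivOfCardEq (hfiber a),
    funext (Equiv.ofFiberEquiv_map _)⟩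

theorem sum_support_mul_comp_perm {ι R : Type*} [Semiring R] {p : (ι → ℕ) →₀ R}
    (hp : ∀ (σ : Equiv.Perm ι) (i : ι → ℕ), p (i ∘ σ) = p i)
    (σ : Equiv.Perm ι) (g : (ι → ℕ) → R) :
    ∑ i ∈ p.support, p i * g (i ∘ σ) = ∑ i ∈ p.support, p i * g i :=
  Finset.sum_equiv (σ.symm.arrowCongr (Equiv.refl ℕ))
    (fun i => by rw [Finsupp.mem_support_iff, Finsupp.mem_support_iff, ← hp σ i]; rfl)
    (fun i _ => by rw [← hp σ i]; rfl)

theorem sum_support_mul_prod_pow_comp {ι R : Type*} [Fintype ι] [CommSemiring R]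
    {p : (ι → ℕ) →₀ R} (hp : ∀ (σ : Equiv.Perm ι) (i : ι → ℕ), p (i ∘ σ) = p i)
    (σ : Equiv.Perm ι) (x : ι → R) :
    ∑ i ∈ p.support, p i * ∏ k, x (σ k) ^ i k = ∑ i ∈ p.support, p i * ∏ k, x k ^ i k := by
  conv_rhs => rw [← sum_support_mul_comp_perm hp σ⁻¹]
  refine Finset.sum_congr rfl fun i _ => congrArg _ ?_
  exact Fintype.prod_equiv σ _ _ fun k => by simp

theorem Module.Basis.repr_mkFinCons_coe {R M : Type*} [Ring R] [AddCommGroup M] [Module R M]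
    {n : ℕ} {N : Submodule R M} (y : M) (b : Basis (Fin n) R N)
    (hli : ∀ (c : R), ∀ x ∈ N, c • y + x = 0 → c = 0) (hsp : ∀ z : M, ∃ c : R, z + c • y ∈ N)
    (x : N) : ⇑((mkFinCons y b hli hsp).repr x) = Fin.cons 0 ⇑(b.repr x) := by
  set c := mkFinCons y b hli hsp
  have hx : (x : M) = ∑ m, (Fin.cons 0 ⇑(b.repr x) : Fin (n + 1) → R) m • c m := by
    simp only [Fin.sum_univ_succ, c, coe_mkFinCons, Fin.cons_zero, Fin.cons_succ, zero_smul,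
      zero_add, Function.comp_apply]
    exact_mod_cast (b.sum_repr x).symm
  rw [hx, c.repr_sum_self]

/-- The kernel of an eigenvector of the dual map is an invariant hyperplane; a vector outside it
followed by a triangularizing basis of the hyperplane gives the basis. -/
theorem Module.End.exists_basis_isLowerTriangular {K V : Type*} [Field K] [IsAlgClosed K]
    [AddCommGroup V] [Module K V] [FiniteDimensional K V] {n : ℕ} (hn : finrank K V = n)
    (f : Module.End K V) :
    ∃ c : Basis (Fin n) K V, (LinearMap.toMatrix c c f).IsLowerTriangular := by
  induction n generalizing V with
  | zero => exact ⟨finBasisOfFinrankEq K V hn, fun r _ _ => r.elim0⟩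
  | succ n ih =>
    have : Nontrivial V := nontrivial_of_finrank_eq_succ hn
    obtain ⟨μ, hμ⟩ := Module.End.exists_eigenvalue f.dualMap
    obtain ⟨φ, hφ⟩ := hμ.exists_hasEigenvector
    have hfN : ∀ x ∈ LinearMap.ker φ, f x ∈ LinearMap.ker φ := by
      intro x hx
      rw [LinearMap.mem_ker] at hx ⊢
      rw [← LinearMap.dualMap_apply, hφ.apply_eq_smul, LinearMap.smul_apply, hx, smul_zero]
    have hN : finrank K (LinearMap.ker φ) = n := by
      have := Module.Dual.finrank_ker_add_one_of_ne_zero hφ.2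
      omega
    obtain ⟨b, hb⟩ := ih hN (f.restrict hfN)
    obtain ⟨y, hy⟩ : ∃ y, φ y ≠ 0 := by
      by_contra! h
      exact hφ.2 (LinearMap.ext h)
    have hli : ∀ (a : K), ∀ x ∈ LinearMap.ker φ, a • y + x = 0 → a = 0 := by
      intro a x hx h
      have := congrArg φ h
      rw [map_add, map_smul, LinearMap.mem_ker.mp hx, map_zero, add_zero, smul_eq_mul] at this
      exact (mul_eq_zero.mp this).resolve_right hy
    have hsp : ∀ z : V, ∃ a : K, z + a • y ∈ LinearMap.ker φ := fun z =>
      ⟨-(φ z / φ y), by simp [LinearMap.mem_ker, div_mul_cancel₀ _ hy]⟩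
    refine ⟨Basis.mkFinCons y b hli hsp, fun r j hrj => ?_⟩
    rw [OrderDual.toDual_lt_toDual] at hrj
    cases j using Fin.cases with
    | zero => exact absurd hrj (Fin.not_lt_zero r)
    | succ k =>
      rw [LinearMap.toMatrix_apply, Basis.coe_mkFinCons, Fin.cons_succ, Function.comp_apply,
        ← LinearMap.coe_restrict_apply hfN, Basis.repr_mkFinCons_coe]
      cases r using Fin.cases with
      | zero => rfl
      | succ s =>
        rw [Fin.cons_succ, ← LinearMap.toMatrix_apply]
        exact hb (Fin.succ_lt_succ_iff.mp hrj)

namespace Matrix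

variable {ι R : Type*} [Fintype ι] [DecidableEq ι]

theorem BlockTriangular.pow_apply_self [Semiring R] {α : Type*} [LinearOrder α]
    {M : Matrix ι ι R} {b : ι → α} (hM : M.BlockTriangular b) (hb : Function.Injective b)
    (k : ℕ) (c : ι) : (M ^ k) c c = M c c ^ k := by
  induction k with
  | zero => simp
  | succ k ih =>
    rw [pow_succ, pow_succ, mul_apply, Finset.sum_eq_single c, ih]
    · intro s _ hs
      rcases lt_or_gt_of_ne (hb.ne hs) with h | h
      · rw [hM.pow k h, zero_mul]
      · rw [hM h, mul_zero]
    · simp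

theorem exists_isLowerTriangular_mul_eq_mul {K : Type*} [Field K] [IsAlgClosed K] {n : ℕ}
    (B : Matrix (Fin n) (Fin n) K) :
    ∃ P T : Matrix (Fin n) (Fin n) K, IsUnit P.det ∧ T.IsLowerTriangular ∧ B * P = P * T := by
  set e := Pi.basisFun K (Fin n)
  obtain ⟨c, hc⟩ := Module.End.exists_basis_isLowerTriangular (finrank_fin_fun K) (toLin' B)
  refine ⟨e.toMatrix c, LinearMap.toMatrix c c (toLin' B),
    isUnit_det_of_right_inverse (e.toMatrix_mul_toMatrix_flip c), hc, ?_⟩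
  conv_lhs => rw [← LinearMap.toMatrix'_toLin' B, ← LinearMap.toMatrix_eq_toMatrix']
  rw [linearMap_toMatrix_mul_basis_toMatrix, basis_toMatrix_mul_linearMap_toMatrix]

section CommRing

variable [CommRing R]

theorem charpoly_eq_of_mul_eq_mul {B P T : Matrix ι ι R} (hP : IsUnit P.det)
    (h : B * P = P * T) : T.charpoly = B.charpoly := by
  have hT : T = P⁻¹ * (B * P) := by rw [h, nonsing_inv_mul_cancel_left _ _ hP]
  rw [hT, charpoly_mul_comm, mul_nonsing_inv_cancel_right _ _ hP]

section LinearOrder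

variable [LinearOrder ι]

theorem IsLowerTriangular.det_pow_cols {T : Matrix ι ι R} (hT : T.IsLowerTriangular)
    (i : ι → ℕ) : (of fun r c => (T ^ i c) r c).det = ∏ c, T c c ^ i c := by
  have hlow : (of fun r c => (T ^ i c) r c).IsLowerTriangular := fun r c hrc => hT.pow (i c) hrc
  rw [det_of_isLowerTriangular _ hlow]
  exact Finset.prod_congr rfl fun c _ => hT.pow_apply_self OrderDual.toDual.injective _ c

theorem charpoly_of_isLowerTriangular (M : Matrix ι ι R) (h : M.IsLowerTriangular) :
    M.charpoly = ∏ i, (Polynomial.X - Polynomial.C (M i i)) := by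
  simp [charpoly, det_of_isLowerTriangular _ h.charmatrix]

theorem roots_charpoly_of_isLowerTriangular [IsDomain R] {M : Matrix ι ι R}
    (h : M.IsLowerTriangular) : M.charpoly.roots = univ.val.map M.diag := by
  have := Polynomial.roots_multiset_prod_X_sub_C (univ.val.map M.diag)
  rw [Multiset.map_map] at this
  rwa [charpoly_of_isLowerTriangular M h, Finset.prod_eq_multiset_prod]

end LinearOrder

def detPowMulVec (B : Matrix ι ι R) (i : ι → ℕ) : MultilinearMap R (fun _ : ι => ι → R) R :=
  detRowAlternating.toMultilinearMap.compLinearMap fun c => (B ^ i c).mulVecLin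

theorem detPowMulVec_apply (B : Matrix ι ι R) (i : ι → ℕ) (v : ι → ι → R) :
    detPowMulVec B i v = det (of fun c => B ^ i c *ᵥ v c) := rfl

theorem detPowMulVec_comp_perm (B : Matrix ι ι R) (i : ι → ℕ) (v : ι → ι → R)
    (σ : Equiv.Perm ι) :
    detPowMulVec B (i ∘ σ) (v ∘ σ) = σ.sign • detPowMulVec B i v :=
  detRowAlternating.map_perm (fun c => B ^ i c *ᵥ v c) σ

variable [IsAddTorsionFree R]

def symmDetPowMulVec (B : Matrix ι ι R) (p : (ι → ℕ) →₀ R)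
    (hp : ∀ (σ : Equiv.Perm ι) (i : ι → ℕ), p (i ∘ σ) = p i) : (ι → R) [⋀^ι]→ₗ[R] R where
  toMultilinearMap := ∑ i ∈ p.support, p i • detPowMulVec B i
  map_eq_zero_of_eq' v c₀ c₁ hv hne := by
    set τ := Equiv.swap c₀ c₁
    have hvτ : v ∘ τ = v := by
      funext c
      rcases eq_or_ne c c₀ with rfl | h₀
      · simp [τ, hv]
      rcases eq_or_ne c c₁ with rfl | h₁
      · simp [τ, hv]
      · simp [τ, Equiv.swap_apply_of_ne_of_ne h₀ h₁]
    have hanti (i : ι → ℕ) : detPowMulVec B (i ∘ τ) v = -detPowMulVec B i v := by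
      have h := detPowMulVec_comp_perm B i v τ
      rwa [hvτ, Equiv.Perm.sign_swap hne, Units.neg_smul, one_smul] at h
    change (∑ i ∈ p.support, p i • detPowMulVec B i) v = 0
    simp only [_root_.sum_apply, _root_.smul_apply, smul_eq_mul]
    rw [← self_eq_neg]
    calc ∑ i ∈ p.support, p i * detPowMulVec B i v
        = ∑ i ∈ p.support, p i * detPowMulVec B (i ∘ τ) v :=
          (sum_support_mul_comp_perm hp τ fun i => detPowMulVec B i v).symm
      _ = -∑ i ∈ p.support, p i * detPowMulVec B i v := by
        simp only [hanti, mul_neg, Finset.sum_neg_distrib]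

theorem symmDetPowMulVec_apply (B : Matrix ι ι R) (p : (ι → ℕ) →₀ R)
    (hp : ∀ (σ : Equiv.Perm ι) (i : ι → ℕ), p (i ∘ σ) = p i) (v : ι → ι → R) :
    symmDetPowMulVec B p hp v = ∑ i ∈ p.support, p i * detPowMulVec B i v := by
  change (∑ i ∈ p.support, p i • detPowMulVec B i) v = _
  simp only [_root_.sum_apply, _root_.smul_apply, smul_eq_mul]

theorem symmDetPowMulVec_apply_cols (B : Matrix ι ι R) (p : (ι → ℕ) →₀ R)
    (hp : ∀ (σ : Equiv.Perm ι) (i : ι → ℕ), p (i ∘ σ) = p i) (V : Matrix ι ι R) :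
    symmDetPowMulVec B p hp (fun c r => V r c)
      = ∑ i ∈ p.support, p i * (of fun r c => (B ^ i c * V) r c).det := by
  rw [symmDetPowMulVec_apply]
  refine Finset.sum_congr rfl fun i _ => ?_
  rw [detPowMulVec_apply, ← det_transpose]
  rfl

theorem sum_mul_det_pow_cols_mul (B : Matrix ι ι R) (p : (ι → ℕ) →₀ R)
    (hp : ∀ (σ : Equiv.Perm ι) (i : ι → ℕ), p (i ∘ σ) = p i) (V : Matrix ι ι R) :
    ∑ i ∈ p.support, p i * (of fun r c => (B ^ i c * V) r c).det
      = (∑ i ∈ p.support, p i * (of fun r c => (B ^ i c) r c).det) * V.det := by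
  have h := (symmDetPowMulVec B p hp).eq_smul_basis_det (Pi.basisFun R ι)
  have hbasis : (Pi.basisFun R ι : ι → ι → R) = fun c r => (1 : Matrix ι ι R) r c := by
    ext c r
    simp [one_apply, Pi.single_apply, eq_comm]
  rw [Pi.basisFun_det] at h
  rw [← symmDetPowMulVec_apply_cols B p hp, h, AlternatingMap.smul_apply, hbasis,
    symmDetPowMulVec_apply_cols, smul_eq_mul]
  simp only [mul_one]
  rw [← det_transpose V]
  rfl

theorem sum_mul_det_pow_cols_of_mul_eq_mul [LinearOrder ι]
    {B P T : Matrix ι ι R} {p : (ι → ℕ) →₀ R}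
    (hp : ∀ (σ : Equiv.Perm ι) (i : ι → ℕ), p (i ∘ σ) = p i) (hP : IsUnit P.det)
    (hT : T.IsLowerTriangular) (h : B * P = P * T) :
    ∑ i ∈ p.support, p i * (of fun r c => (B ^ i c) r c).det
      = ∑ i ∈ p.support, p i * ∏ c, T c c ^ i c := by
  have hpow (k : ℕ) : B ^ k * P = P * T ^ k := (SemiconjBy.pow_right h.symm k).symm
  have hcols (i : ι → ℕ) :
      of (fun r c => (B ^ i c * P) r c) = P * of fun r c => (T ^ i c) r c := by
    ext r c
    rw [of_apply, hpow]
    simp only [mul_apply, of_apply]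
  have := sum_mul_det_pow_cols_mul B p hp P
  simp only [hcols, det_mul, hT.det_pow_cols] at this
  refine hP.mul_right_cancel ?_
  rw [← this, Finset.sum_mul]
  exact Finset.sum_congr rfl fun i _ => by ring

end CommRing

end Matrix

/-- If `B` is an `n × n` complex matrix with eigenvalues `b₁,…,bₙ` (counted with
algebraic multiplicity) and `q(x₁,…,xₙ) = Σᵢ pᵢ x₁^{i₁}⋯xₙ^{iₙ}` is a symmetric
polynomial, then `q(b₁,…,bₙ) = Σᵢ pᵢ det(B^{i₁}_1, …, B^{iₙ}_n)`. -/
theorem symm_poly_eigenvalues_eq_sum_det {n : ℕ}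
    (B : Matrix (Fin n) (Fin n) ℂ) (b : Fin n → ℂ)
    (hb : B.charpoly.roots = Multiset.map b Finset.univ.val)
    (p : (Fin n → ℕ) →₀ ℂ)
    (hp : ∀ (σ : Equiv.Perm (Fin n)) (i : Fin n → ℕ), p (i ∘ σ) = p i) :
    ∑ i ∈ p.support, p i * ∏ k : Fin n, b k ^ i k
      = ∑ i ∈ p.support, p i * (Matrix.of fun r c => (B ^ i c) r c).det := by
  obtain ⟨P, T, hP, hT, hBP⟩ := B.exists_isLowerTriangular_mul_eq_mul
  obtain ⟨σ, hσ⟩ : ∃ σ : Equiv.Perm (Fin n), b ∘ σ = T.diag := by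
    refine exists_perm_comp_eq_of_map_univ_eq ?_
    rw [← hb, ← Matrix.charpoly_eq_of_mul_eq_mul hP hBP,
      Matrix.roots_charpoly_of_isLowerTriangular hT]
  have hbT (k : Fin n) : b (σ k) = T k k := congrFun hσ k
  rw [Matrix.sum_mul_det_pow_cols_of_mul_eq_mul hp hP hT hBP,
    ← sum_support_mul_prod_pow_comp hp σ]
  simp only [hbT]
end

section
/- Let p : I^n → ℝ be symmetric coefficients and M^{(j)} ∈ ℝ^{n×n} a family of matrices, and define F(M) = Σ_{i ∈ I^n} p(i) det(M^{(i₁)}_1,…,M^{(iₙ)}_n). Then for any n×n matrices X, Y: F(X M Y) = det(X)·det(Y)·F(M), where (XMY)^{(j)} = X M^{(j)} Y for each j. -/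
/-!
Left multiplication by `X` acts on every column at once, so it factors out of each determinant
as `det X`. For `Y`, column `c` of `M⁽ʲ⁾ Y` is `M⁽ʲ⁾ y_c`, where `y_c` is column `c` of `Y`;
hence `F(MY) = Φ(y)` for the multilinear form `Φ(v) = Σᵢ p(i) det(M^{(i_c)} v_c)_c`.
Symmetry of `p` makes `Φ` alternating, and an alternating form on `Rⁿ` is `det` times its value
on the standard basis, which is `F(M)`.
-/

open Matrix Finset

section

variable {R ι I : Type*} [CommRing R] [Fintype ι] [DecidableEq ι]

noncomputable def detMulVec (A : ι → Matrix ι ι R) : MultilinearMap R (fun _ : ι => ι → R) R :=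
  (detRowAlternating : (ι → R) [⋀^ι]→ₗ[R] R).toMultilinearMap.compLinearMap
    fun c => (A c).mulVecLin

theorem detMulVec_apply (A : ι → Matrix ι ι R) (v : ι → ι → R) :
    detMulVec A v = detRowAlternating fun c => A c *ᵥ v c := rfl

theorem detMulVec_comp_swap (A : ι → Matrix ι ι R) {v : ι → ι → R} {a b : ι}
    (hv : v a = v b) (hab : a ≠ b) :
    detMulVec (A ∘ Equiv.swap a b) v = -detMulVec A v := by
  have hv_swap : v ∘ Equiv.swap a b = v := by
    rw [Equiv.comp_swap_eq_update, hv, Function.update_eq_self, ← hv, Function.update_eq_self]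
  rw [detMulVec_apply, detMulVec_apply, ← AlternatingMap.map_swap _ _ hab]
  conv_lhs => rw [← hv_swap]
  rfl

theorem detMulVec_eq_zero (A : ι → Matrix ι ι R) {v : ι → ι → R} {a b : ι}
    (hA : A a = A b) (hv : v a = v b) (hab : a ≠ b) : detMulVec A v = 0 :=
  detRowAlternating.map_eq_zero_of_eq (fun c => A c *ᵥ v c) (by simp only [hA, hv]) hab

theorem det_of_mul_apply_eq_detRowAlternating (A : ι → Matrix ι ι R) (Y : Matrix ι ι R) :
    (of fun r c => (A c * Y) r c).det = detRowAlternating fun c => A c *ᵥ Yᵀ c := by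
  rw [← det_transpose]
  rfl

variable (p : (ι → I) →₀ R) (M : I → Matrix ι ι R)

noncomputable def detSum : R :=
  ∑ i ∈ p.support, p i * (of fun r c => M (i c) r c).det

theorem detSum_mul_left (X : Matrix ι ι R) :
    detSum p (fun j => X * M j) = X.det * detSum p M := by
  have hcols (i : ι → I) :
      (of fun r c => (X * M (i c)) r c) = X * of fun r c => M (i c) r c := by
    ext r c
    simp [mul_apply]
  simp only [detSum, hcols, det_mul, mul_sum]
  exact sum_congr rfl fun i _ => mul_left_comm _ _ _

noncomputable def detSumAlternating
    (hp : ∀ (σ : Equiv.Perm ι) (i : ι → I), p (i ∘ σ) = p i) : (ι → R) [⋀^ι]→ₗ[R] R :=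
  { ∑ i ∈ p.support, p i • detMulVec (M ∘ i) with
    map_eq_zero_of_eq' := fun v a b hv hab => by
      simp only [MultilinearMap.toFun_eq_coe, _root_.sum_apply, _root_.smul_apply, smul_eq_mul]
      -- The terms of `i` and `i ∘ swap a b` cancel; a fixed point `i` has two equal columns.
      refine sum_involution (fun i _ => i ∘ Equiv.swap a b) (fun i _ => ?_)
        (fun i _ hi hswap => hi ?_) (fun i hi => ?_) (fun i _ => ?_)
      · rw [hp, ← Function.comp_assoc, detMulVec_comp_swap _ hv hab, mul_neg, add_neg_cancel]
      · have hi_eq : i a = i b := by simpa using congrFun hswap b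
        rw [detMulVec_eq_zero (M ∘ i) (congrArg M hi_eq) hv hab, mul_zero]
      · rwa [Finsupp.mem_support_iff, hp, ← Finsupp.mem_support_iff]
      · ext c
        simp }

theorem detSumAlternating_apply (hp : ∀ (σ : Equiv.Perm ι) (i : ι → I), p (i ∘ σ) = p i)
    (v : ι → ι → R) :
    detSumAlternating p M hp v
      = ∑ i ∈ p.support, p i * detRowAlternating fun c => M (i c) *ᵥ v c := by
  simp [detSumAlternating, detMulVec_apply]

theorem detSumAlternating_apply_cols
    (hp : ∀ (σ : Equiv.Perm ι) (i : ι → I), p (i ∘ σ) = p i) (Y : Matrix ι ι R) :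
    detSumAlternating p M hp (fun c r => Y r c) = detSum p (fun j => M j * Y) := by
  simp only [detSumAlternating_apply, detSum, det_of_mul_apply_eq_detRowAlternating]
  rfl

theorem detSum_mul_right (hp : ∀ (σ : Equiv.Perm ι) (i : ι → I), p (i ∘ σ) = p i)
    (Y : Matrix ι ι R) : detSum p (fun j => M j * Y) = Y.det * detSum p M := by
  set Φ := detSumAlternating p M hp
  have hbasis : ⇑(Pi.basisFun R ι) = fun c r => (1 : Matrix ι ι R) r c := by
    ext c r
    simp [one_apply, Pi.single_apply]
  calc detSum p (fun j => M j * Y) = Φ (fun c r => Y r c) :=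
        (detSumAlternating_apply_cols p M hp Y).symm
    _ = (Pi.basisFun R ι).det (fun c r => Y r c) * Φ (Pi.basisFun R ι) := by
      conv_lhs => rw [Φ.eq_smul_basis_det (Pi.basisFun R ι)]
      rw [AlternatingMap.smul_apply, smul_eq_mul, mul_comm]
    _ = Y.det * detSum p M := by
      rw [Pi.basisFun_det_apply, hbasis, detSumAlternating_apply_cols]
      simp only [mul_one]
      exact congrArg (· * _) (det_transpose Y)

end

/-- For symmetric coefficients `p` and matrices `M⁽ʲ⁾`, define
`F(M) = Σᵢ p(i) det(M^{(i₁)}_1,…,M^{(iₙ)}_n)`. Then for any matrices `X, Y`: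
`F(X M Y) = det(X) · det(Y) · F(M)`, where `(XMY)⁽ʲ⁾ = X M⁽ʲ⁾ Y`. -/
theorem det_sum_mul_left_right {n : ℕ} {I : Type*}
    (p : (Fin n → I) →₀ ℝ)
    (hp : ∀ (σ : Equiv.Perm (Fin n)) (i : Fin n → I), p (i ∘ σ) = p i)
    (M : I → Matrix (Fin n) (Fin n) ℝ) (X Y : Matrix (Fin n) (Fin n) ℝ) :
    ∑ i ∈ p.support, p i * (Matrix.of fun r c => (X * M (i c) * Y) r c).det
      = X.det * Y.det *
        ∑ i ∈ p.support, p i * (Matrix.of fun r c => M (i c) r c).det := by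
  change detSum p (fun j => X * M j * Y) = X.det * Y.det * detSum p M
  rw [detSum_mul_right p _ hp, detSum_mul_left, mul_assoc, mul_left_comm]
end
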